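/- arXiv:1604.00777 — 2 statements merged into one kernel-verified Lean document; each statement's English description precedes it below -/
import Mathlib

section
/- Let R ⊆ A × X be RS-compatible on a polarity. Define, on Galois-stable subsets of A, the operation □U := ⋂ {R⁻¹[x] | x ∈ X, U ⊆ {x}↓}. Then □ preserves arbitrary intersections of Galois-stable sets: □(⋂ᵢ Uᵢ) = ⋂ᵢ □Uᵢ whenever each Uᵢ is Galois-stable, provided each Uᵢ equals the intersection of the sets {x}↓ containing it. -/
/-!
Under the second compatibility condition, `a ∈ □U` as soon as `(R[a])↓ ⊆ U`, and for a
Galois-stable `U` the converse holds. So on stable sets, membership in `□U` is the condition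
`(R[a])↓ ⊆ U`, which visibly commutes with intersections.
-/

variable {A X : Type*}

/-- The upper Galois map of a polarity. -/
def up (perp : A → X → Prop) (U : Set A) : Set X := {x | ∀ a ∈ U, perp a x}

/-- The lower Galois map of a polarity. -/
def dn (perp : A → X → Prop) (V : Set X) : Set A := {a | ∀ x ∈ V, perp a x}

/-- Specialization pre-order on objects. -/
def leA (perp : A → X → Prop) (a b : A) : Prop := ∀ x, perp b x → perp a x

/-- Specialization pre-order on features. -/
def leX (perp : A → X → Prop) (x y : X) : Prop := ∀ a, perp a x → perp a y

def box (perp R : A → X → Prop) (U : Set A) : Set A :=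
  ⋂ x ∈ {x : X | U ⊆ dn perp {x}}, {a | R a x}

section Box

variable {perp R : A → X → Prop} {U V : Set A} {a : A}

theorem subset_dn_singleton_iff {x : X} : U ⊆ dn perp {x} ↔ x ∈ up perp U := by
  simp [Set.subset_def, dn, up]

theorem mem_box_iff : a ∈ box perp R U ↔ ∀ x ∈ up perp U, R a x := by
  simp [box, subset_dn_singleton_iff]

theorem box_mono (h : U ⊆ V) : box perp R U ⊆ box perp R V := fun _ ha =>
  mem_box_iff.2 fun x hx => mem_box_iff.1 ha x fun b hb => hx b (h hb)

theorem dn_subset_of_mem_box (hU : dn perp (up perp U) ⊆ U) (ha : a ∈ box perp R U) :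
    dn perp {x | R a x} ⊆ U :=
  fun _ hb => hU fun x hx => hb x (mem_box_iff.1 ha x hx)

theorem mem_box_of_dn_subset (hRa : up perp (dn perp {x | R a x}) ⊆ {x | R a x})
    (h : dn perp {x | R a x} ⊆ U) : a ∈ box perp R U :=
  mem_box_iff.2 fun _ hx => hRa fun _ hb => hx _ (h hb)

end Box

theorem box_preserves_inter_general (perp : A → X → Prop) (R : A → X → Prop)
    (hc2 : ∀ a : A, up perp (dn perp {x | R a x}) ⊆ {x | R a x})
    {ι : Type*} (U : ι → Set A)
    (hstab : ∀ i, dn perp (up perp (U i)) = U i) :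
    (⋂ x ∈ {x : X | (⋂ i, U i) ⊆ dn perp {x}}, {a | R a x}) =
      ⋂ i, ⋂ x ∈ {x : X | U i ⊆ dn perp {x}}, {a | R a x} := by
  show box perp R (⋂ i, U i) = ⋂ i, box perp R (U i)
  refine Set.Subset.antisymm
    (Set.subset_iInter fun i => box_mono (Set.iInter_subset U i)) fun a ha => ?_
  exact mem_box_of_dn_subset (hc2 a) <| Set.subset_iInter fun i =>
    dn_subset_of_mem_box (hstab i).subset (Set.mem_iInter.1 ha i)

theorem box_preserves_inter (perp : A → X → Prop) (R : A → X → Prop)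
    (hc1 : ∀ x : X, dn perp (up perp {a | R a x}) ⊆ {a | R a x})
    (hc2 : ∀ a : A, up perp (dn perp {x | R a x}) ⊆ {x | R a x})
    {ι : Type*} (U : ι → Set A)
    (hstab : ∀ i, dn perp (up perp (U i)) = U i)
    (hmeet : ∀ i, U i = ⋂ x ∈ {x : X | U i ⊆ dn perp {x}}, dn perp {x}) :
    (⋂ x ∈ {x : X | (⋂ i, U i) ⊆ dn perp {x}}, {a | R a x}) =
      ⋂ i, ⋂ x ∈ {x : X | U i ⊆ dn perp {x}}, {a | R a x} :=
  box_preserves_inter_general perp R hc2 U hstab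
end

section
/- Let R ⊆ A × X be RS-compatible. The axiom correspondent of factivity holds in the following sense: □({m}↓) ⊆ {m}↓ for all m ∈ X if and only if ∀a ∀m (a R m → a ⊥ m), where □U := ⋂ {R⁻¹[y] | U ⊆ {y}↓}. -/
variable {A X : Type*}

section Box

variable {perp R : A → X → Prop}

theorem mem_dn_singleton {a : A} {x : X} : a ∈ dn perp {x} ↔ perp a x := by
  simp [dn]

/-- `R` is upward closed in its second argument along the specialization order, since each
`R[a]` is Galois-closed. -/
theorem rel_of_dn_singleton_subset (hc2 : ∀ a : A, up perp (dn perp {x | R a x}) ⊆ {x | R a x})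
    {a : A} {m y : X} (hRm : R a m) (hmy : dn perp {m} ⊆ dn perp {y}) : R a y := by
  refine hc2 a fun b hb => ?_
  exact mem_dn_singleton.mp (hmy (mem_dn_singleton.mpr (hb m hRm)))

theorem mem_box_dn_singleton_iff
    (hc2 : ∀ a : A, up perp (dn perp {x | R a x}) ⊆ {x | R a x}) {a : A} {m : X} :
    a ∈ ⋂ y ∈ {y : X | dn perp {m} ⊆ dn perp {y}}, {a | R a y} ↔ R a m := by
  simp only [Set.mem_iInter, Set.mem_ofPred_eq]
  exact ⟨fun ha => ha m subset_rfl, fun hRm y hmy => rel_of_dn_singleton_subset hc2 hRm hmy⟩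

end Box

theorem factivity_correspondence_general (perp : A → X → Prop) (R : A → X → Prop)
    (hc2 : ∀ a : A, up perp (dn perp {x | R a x}) ⊆ {x | R a x}) :
    (∀ m : X, (⋂ y ∈ {y : X | dn perp {m} ⊆ dn perp {y}}, {a | R a y}) ⊆ dn perp {m}) ↔
      (∀ a m, R a m → perp a m) := by
  calc _ ↔ ∀ m a, R a m → perp a m := forall_congr' fun m => forall_congr' fun a => by
        rw [mem_box_dn_singleton_iff hc2, mem_dn_singleton]
    _ ↔ _ := forall_comm

theorem factivity_correspondence (perp : A → X → Prop) (R : A → X → Prop)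
    (hc1 : ∀ x : X, dn perp (up perp {a | R a x}) ⊆ {a | R a x})
    (hc2 : ∀ a : A, up perp (dn perp {x | R a x}) ⊆ {x | R a x}) :
    (∀ m : X, (⋂ y ∈ {y : X | dn perp {m} ⊆ dn perp {y}}, {a | R a y}) ⊆ dn perp {m}) ↔
      (∀ a m, R a m → perp a m) :=
  factivity_correspondence_general perp R hc2
end
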